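/- Every probability measure P defined on an arbitrary σ-algebra F on a countable set Ω extends to a probability measure P* on the power set of Ω, i.e. there exists a probability measure P* on (Ω, P(Ω)) with P*(A) = P(A) for all A ∈ F. -/
import Mathlib


open MeasureTheory

namespace ExtendAux

variable {Ω : Type*}

/-- Two points are related if no measurable set separates them. -/
def mrel (m : MeasurableSpace Ω) (a b : Ω) : Prop :=
  ∀ s : Set Ω, MeasurableSet[m] s → (a ∈ s ↔ b ∈ s)

def msetoid (m : MeasurableSpace Ω) : Setoid Ω :=
  ⟨mrel m, ⟨fun _ _ _ => Iff.rfl,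
    fun h s hs => (h s hs).symm,
    fun h1 h2 s hs => (h1 s hs).trans (h2 s hs)⟩⟩

/-- The atom of `x` is measurable when `Ω` is countable. -/
lemma atom_measurable [Countable Ω] (m : MeasurableSpace Ω) (x : Ω) :
    MeasurableSet[m] {ω | mrel m ω x} := by
  classical
  have hsep : ∀ y : Ω, ¬ mrel m x y → ∃ s : Set Ω, MeasurableSet[m] s ∧ x ∈ s ∧ y ∉ s := by
    intro y hy
    simp only [mrel, not_forall] at hy
    obtain ⟨s, hs, hxy⟩ := hy
    by_cases hx : x ∈ s
    · exact ⟨s, hs, hx, fun hys => hxy ⟨fun _ => hys, fun _ => hx⟩⟩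
    · refine ⟨sᶜ, hs.compl, hx, fun hyc => ?_⟩
      exact hxy ⟨fun h => absurd h hx, fun h => absurd h hyc⟩
  let t : Ω → Set Ω := fun y =>
    if h : mrel m x y then Set.univ else (hsep y h).choose
  have ht : ∀ y, MeasurableSet[m] (t y) ∧ x ∈ t y ∧ (¬ mrel m x y → y ∉ t y) := by
    intro y
    by_cases h : mrel m x y
    · simp [t, h]
    · refine ⟨?_, ?_, fun _ => ?_⟩ <;> simp only [t, dif_neg h]
      · exact (hsep y h).choose_spec.1
      · exact (hsep y h).choose_spec.2.1
      · exact (hsep y h).choose_spec.2.2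
  have key : {ω | mrel m ω x} = ⋂ y, t y := by
    ext ω
    simp only [Set.mem_setOf_eq, Set.mem_iInter]
    constructor
    · intro hω y
      exact (hω (t y) (ht y).1).mpr (ht y).2.1
    · intro hω
      by_contra hrel
      have hxo : ¬ mrel m x ω := fun h => hrel fun s hs => (h s hs).symm
      exact (ht ω).2.2 hxo (hω ω)
  rw [key]
  exact MeasurableSet.iInter fun y => (ht y).1

end ExtendAux

theorem extend_probability_to_powerset
    {Ω : Type*} [Countable Ω] [m : MeasurableSpace Ω]
    (P : Measure Ω) [IsProbabilityMeasure P] :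
    ∃ Pstar : @Measure Ω ⊤, @IsProbabilityMeasure Ω ⊤ Pstar ∧
      ∀ A : Set Ω, MeasurableSet A → Pstar A = P A := by
  classical
  open ExtendAux in
  let s : Setoid Ω := msetoid m
  let f : Ω → Ω := fun ω => Quotient.out (Quotient.mk s ω)
  have hfrel : ∀ ω, mrel m (f ω) ω := by
    intro ω
    have : Quotient.mk s (f ω) = Quotient.mk s ω := Quotient.out_eq _
    exact Quotient.exact this
  have hconst : ∀ {a b : Ω}, mrel m a b → f a = f b := by
    intro a b hab
    have : Quotient.mk s a = Quotient.mk s b := Quotient.sound hab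
    simp only [f, this]
  have hf : @Measurable Ω Ω m ⊤ f := by
    intro A _
    have : f ⁻¹' A = ⋃ x : Ω, (if f x ∈ A then {ω | mrel m ω x} else ∅) := by
      ext ω
      simp only [Set.mem_preimage, Set.mem_iUnion]
      constructor
      · intro h
        exact ⟨ω, by simp only [h, if_true]; exact fun s hs => Iff.rfl⟩
      · rintro ⟨x, hx⟩
        by_cases h : f x ∈ A
        · simp only [h, if_true, Set.mem_setOf_eq] at hx
          rwa [hconst hx]
        · simp [h] at hx
    rw [this]
    exact MeasurableSet.iUnion fun x => by
      by_cases h : f x ∈ A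
      · simpa [h] using atom_measurable m x
      · simp [h]
  refine ⟨@Measure.map Ω Ω m ⊤ f P, ?_, ?_⟩
  · exact @Measure.isProbabilityMeasure_map Ω Ω m ⊤ P _ f (@Measurable.aemeasurable Ω Ω m ⊤ f P hf)
  · intro A hA
    rw [@Measure.map_apply Ω Ω m ⊤ P f hf A (MeasurableSet.of_compl trivial)]
    congr 1
    ext ω
    have := hfrel ω A hA
    simp [Set.mem_preimage, this]
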